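/- arXiv:math/0004149 — 7 statements merged into one kernel-verified Lean document; each statement's English description precedes it below -/
import Mathlib

section
/- Let x and h be real numbers with 0 < h ≤ x, and let (a_n) and (b_n) be real numbers indexed by positive integers. Then ∫_x^{2x} (Σ_{y < n ≤ y+h} a_n)·(Σ_{y < m ≤ y+h} b_m) dy = Σ_{x < n ≤ 2x+h} a_n·b_n·f(n,x,h) + Σ_{0 < k ≤ h} Σ_{x < n ≤ 2x+h−k} (a_n·b_{n+k} + a_{n+k}·b_n)·f(n,x,h−k), where k runs over positive integers with k ≤ h. -/
open Finset ArithmeticFunction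

/-- The Generalized Riemann Hypothesis for Dirichlet L-functions: every zero of a
Dirichlet L-function in the critical strip lies on the critical line. -/
def GRH : Prop :=
  ∀ (N : ℕ) [NeZero N] (χ : DirichletCharacter ℂ N) (s : ℂ),
    DirichletCharacter.LFunction χ s = 0 → 0 < s.re → s.re < 1 → s.re = 1 / 2

/-- `ψ(x; q, a) = ∑_{n ≤ x, n ≡ a (mod q)} Λ(n)`. -/
noncomputable def psi (x : ℝ) (q a : ℕ) : ℝ :=
  ∑ n ∈ (Finset.Icc 1 ⌊x⌋₊).filter (fun n : ℕ => (n : ZMod q) = (a : ZMod q)),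
    ArithmeticFunction.vonMangoldt n

/-- `I(x,h,q,a) = ∫_x^{2x} (ψ(y+h;q,a) − ψ(y;q,a) − h/φ(q))² dy`. -/
noncomputable def momentI (x h : ℝ) (q a : ℕ) : ℝ :=
  ∫ y in x..(2 * x), (psi (y + h) q a - psi y q a - h / (q.totient : ℝ)) ^ 2

/-- `λ_R(n) = ∑_{r ≤ R} (μ²(r)/φ(r)) ∑_{d ∣ (r,n)} d·μ(d)`. -/
noncomputable def lamR (R : ℝ) (n : ℕ) : ℝ :=
  ∑ r ∈ Finset.Icc 1 ⌊R⌋₊,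
    ((ArithmeticFunction.moebius r : ℝ) ^ 2 / (r.totient : ℝ)) *
      ∑ d ∈ (Nat.gcd r n).divisors, (d : ℝ) * (ArithmeticFunction.moebius d : ℝ)

/-- `c = γ + ∑_p (log p)/(p(p−1))`. -/
noncomputable def cGY : ℝ :=
  Real.eulerMascheroniConstant +
    ∑' p : Nat.Primes, Real.log (p : ℕ) / (((p : ℕ) : ℝ) * (((p : ℕ) : ℝ) - 1))

/-- `v(k) = ∑_{p ∣ k} (log p)/p`. -/
noncomputable def vGY (k : ℕ) : ℝ := ∑ p ∈ k.primeFactors, Real.log p / (p : ℝ)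

/-- `w(k) = ∏_{p ∣ k} (1 + 1/√p)`. -/
noncomputable def wGY (k : ℕ) : ℝ := ∏ p ∈ k.primeFactors, (1 + 1 / Real.sqrt p)

/-- `g(k) = ∏_{p ∣ k} (1 + p/(p−1))`. -/
noncomputable def gGY (k : ℕ) : ℝ := ∏ p ∈ k.primeFactors, (1 + (p : ℝ) / ((p : ℝ) - 1))

/-- The twin prime constant `C = ∏_{p > 2} (1 − 1/(p−1)²)`. -/
noncomputable def twinC : ℝ :=
  ∏' p : Nat.Primes, (if 2 < (p : ℕ) then 1 - 1 / (((p : ℕ) : ℝ) - 1) ^ 2 else 1)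

/-- The singular series `𝔖(k)`. -/
noncomputable def singSeries (k : ℕ) : ℝ :=
  if 2 ∣ k ∧ k ≠ 0 then
    2 * twinC * ∏ p ∈ k.primeFactors.filter (fun p => 2 < p), ((p : ℝ) - 1) / ((p : ℝ) - 2)
  else 0

/-- `f(n,x,h)`, the length of the interval `[x,2x] ∩ [n−h,n)`. -/
noncomputable def flen (n : ℕ) (x h : ℝ) : ℝ :=
  if x ≤ n ∧ (n : ℝ) < x + h then (n : ℝ) - x
  else if x + h ≤ n ∧ (n : ℝ) ≤ 2 * x then h
  else if 2 * x < n ∧ (n : ℝ) ≤ 2 * x + h then 2 * x - n + h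
  else 0

/-!
For `y ≥ 0` the integer `n` occurs in `∑_{y < n ≤ y + h}` exactly when `y ∈ [n - h, n)`.
Expanding the product of the two window sums, the integral becomes
`∑_{n,m} a_n b_m |[x, 2x] ∩ [n - h, n) ∩ [m - h, m)|`. For `m = n + k` the two windows meet in
`[n - (h - k), n)`, which is empty when `k > h` and otherwise meets `[x, 2x]` in an interval of
length `f(n, x, h - k)`; the terms with `m < n` pair up with those with `n < m`.
-/

open MeasureTheory

lemma sum_sum_eq_sum_diag_add_sum_sum_lt {α M : Type*} [LinearOrder α] [AddCommMonoid M]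
    (s : Finset α) (F : α → α → M) :
    ∑ n ∈ s, ∑ m ∈ s, F n m = ∑ n ∈ s, F n n + ∑ n ∈ s, ∑ m ∈ s with n < m, (F n m + F m n) := by
  have hsplit : ∀ n ∈ s, ∑ m ∈ s, F n m
      = F n n + ∑ m ∈ s with n < m, F n m + ∑ m ∈ s with m < n, F n m := by
    intro n hn
    have hF : ∀ m, F n m = ((if n = m then F n m else 0) + if n < m then F n m else 0)
        + if m < n then F n m else 0 := by
      intro m
      rcases lt_trichotomy n m with hnm | rfl | hmn
      · simp [hnm, hnm.ne, hnm.not_gt]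
      · simp
      · simp [hmn, hmn.ne', hmn.not_gt]
    rw [Finset.sum_congr rfl fun m _ => hF m, Finset.sum_add_distrib, Finset.sum_add_distrib,
      Finset.sum_ite_eq, if_pos hn, Finset.sum_filter, Finset.sum_filter]
  have hswap : ∑ n ∈ s, ∑ m ∈ s with m < n, F n m = ∑ n ∈ s, ∑ m ∈ s with n < m, F m n :=
    Finset.sum_comm' fun n m => by simp only [Finset.mem_filter]; tauto
  rw [Finset.sum_congr rfl hsplit, Finset.sum_add_distrib, Finset.sum_add_distrib, hswap, add_assoc,
    ← Finset.sum_add_distrib]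
  simp_rw [Finset.sum_add_distrib]

lemma sum_Ioc_sum_lt_eq_sum_Icc_sum_Ioc {M : Type*} [AddCommMonoid M] (A B : ℕ) (G : ℕ → ℕ → M) :
    ∑ n ∈ Finset.Ioc A B, ∑ m ∈ Finset.Ioc A B with n < m, G n m
      = ∑ k ∈ Finset.Icc 1 (B - A), ∑ n ∈ Finset.Ioc A (B - k), G n (n + k) := by
  rw [Finset.sum_sigma', Finset.sum_sigma']
  refine Finset.sum_nbij' (fun p => ⟨p.2 - p.1, p.1⟩) (fun q => ⟨q.2, q.2 + q.1⟩) ?_ ?_ ?_ ?_ ?_ <;>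
    simp only [Finset.mem_sigma, Finset.mem_filter, Finset.mem_Ioc, Finset.mem_Icc, Sigma.forall]
  · intro n m _; omega
  · intro k n _; omega
  · intro n m hnm; rw [Nat.add_sub_cancel' hnm.2.2.le]
  · intro k n _; rw [Nat.add_sub_cancel_left]
  · intro n m hnm; rw [Nat.add_sub_cancel' hnm.2.2.le]

def window (h : ℝ) (n : ℕ) : Set ℝ := Set.Ico (n - h) n

lemma measurableSet_window (h : ℝ) (n : ℕ) : MeasurableSet (window h n) := measurableSet_Ico

lemma window_eq_empty {h : ℝ} (hh : h < 0) (n : ℕ) : window h n = ∅ :=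
  Set.Ico_eq_empty (by linarith)

lemma window_inter_window_add (h : ℝ) (n k : ℕ) :
    window h n ∩ window h (n + k) = window (h - k) n := by
  have hk : (0 : ℝ) ≤ k := k.cast_nonneg
  rw [window, window, window, Set.Ico_inter_Ico, Nat.cast_add, max_eq_right (by linarith),
    min_eq_left (by linarith)]
  ring_nf

lemma mem_Ioc_floor_iff_mem_window {y : ℝ} (hy : 0 ≤ y) (h : ℝ) (n : ℕ) :
    n ∈ Finset.Ioc ⌊y⌋₊ ⌊y + h⌋₊ ↔ y ∈ window h n := by
  rw [Finset.mem_Ioc, window, Set.mem_Ico, Nat.floor_lt hy, and_comm (a := (n : ℝ) - h ≤ y)]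
  refine and_congr_right fun hyn => ?_
  rw [Nat.le_floor_iff' (Nat.cast_pos.1 (hy.trans_lt hyn)).ne']
  constructor <;> intro <;> linarith

lemma sum_Ioc_floor_eq_sum_mul_indicator {y : ℝ} (hy : 0 ≤ y) (h : ℝ) {s : Finset ℕ}
    (hs : Finset.Ioc ⌊y⌋₊ ⌊y + h⌋₊ ⊆ s) (c : ℕ → ℝ) :
    ∑ n ∈ Finset.Ioc ⌊y⌋₊ ⌊y + h⌋₊, c n = ∑ n ∈ s, c n * (window h n).indicator (1 : ℝ → ℝ) y := by
  refine (Finset.sum_congr rfl fun n hn => ?_).trans (Finset.sum_subset hs fun n _ hn => ?_)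
  · rw [Set.indicator_of_mem ((mem_Ioc_floor_iff_mem_window hy h n).1 hn), Pi.one_apply, mul_one]
  · rw [Set.indicator_of_notMem (by rwa [← mem_Ioc_floor_iff_mem_window hy]), mul_zero]

lemma sum_Ioc_floor_mul_sum_Ioc_floor {y : ℝ} (hy : 0 ≤ y) (h : ℝ) {s : Finset ℕ}
    (hs : Finset.Ioc ⌊y⌋₊ ⌊y + h⌋₊ ⊆ s) (a b : ℕ → ℝ) :
    (∑ n ∈ Finset.Ioc ⌊y⌋₊ ⌊y + h⌋₊, a n) * (∑ m ∈ Finset.Ioc ⌊y⌋₊ ⌊y + h⌋₊, b m)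
      = ∑ n ∈ s, ∑ m ∈ s, a n * b m * (window h n ∩ window h m).indicator (1 : ℝ → ℝ) y := by
  rw [sum_Ioc_floor_eq_sum_mul_indicator hy h hs, sum_Ioc_floor_eq_sum_mul_indicator hy h hs,
    Finset.sum_mul_sum]
  refine Finset.sum_congr rfl fun n _ => Finset.sum_congr rfl fun m _ => ?_
  rw [Set.inter_indicator_one, Pi.mul_apply]
  ring

lemma intervalIntegrable_indicator_one (u v : ℝ) {t : Set ℝ} (ht : MeasurableSet t) :
    IntervalIntegrable (t.indicator (1 : ℝ → ℝ)) volume u v := by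
  rw [intervalIntegrable_iff]
  exact (integrableOn_const measure_Ioc_lt_top.ne).indicator ht

lemma intervalIntegral_indicator_one {u v : ℝ} (huv : u ≤ v) {t : Set ℝ} (ht : MeasurableSet t) :
    ∫ y in u..v, t.indicator (1 : ℝ → ℝ) y = volume.real (Set.Ico u v ∩ t) := by
  rw [intervalIntegral.integral_of_le huv, ← integral_Ico_eq_integral_Ioc, setIntegral_indicator ht]
  simp

lemma intervalIntegral_sum_sum_mul_indicator {u v : ℝ} (huv : u ≤ v) (s : Finset ℕ)
    (c : ℕ → ℕ → ℝ) {t : ℕ → ℕ → Set ℝ} (ht : ∀ n m, MeasurableSet (t n m)) :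
    ∫ y in u..v, ∑ n ∈ s, ∑ m ∈ s, c n m * (t n m).indicator (1 : ℝ → ℝ) y
      = ∑ n ∈ s, ∑ m ∈ s, c n m * volume.real (Set.Ico u v ∩ t n m) := by
  have hint : ∀ n m,
      IntervalIntegrable (fun y => c n m * (t n m).indicator (1 : ℝ → ℝ) y) volume u v :=
    fun n m => (intervalIntegrable_indicator_one u v (ht n m)).const_mul _
  rw [intervalIntegral.integral_finsetSum fun n _ => by
    simpa only [Finset.sum_fn] using IntervalIntegrable.sum s fun m _ => hint n m]
  refine Finset.sum_congr rfl fun n _ => ?_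
  rw [intervalIntegral.integral_finsetSum fun m _ => hint n m]
  refine Finset.sum_congr rfl fun m _ => ?_
  rw [intervalIntegral.integral_const_mul, intervalIntegral_indicator_one huv (ht n m)]

lemma flen_eq_volume_real {x h : ℝ} (hh : 0 ≤ h) (hhx : h ≤ x) (n : ℕ) :
    flen n x h = volume.real (Set.Ico x (2 * x) ∩ window h n) := by
  rw [window, Set.Ico_inter_Ico, Real.volume_real_Ico, flen]
  split_ifs <;> grind

lemma Nat.floor_sub_natCast_of_le {R : Type*} [Ring R] [LinearOrder R] [IsStrictOrderedRing R]
    [FloorSemiring R] {a : R} {k : ℕ} (hk : (k : R) ≤ a) : ⌊a - k⌋₊ = ⌊a⌋₊ - k := by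
  have h := Nat.floor_add_natCast (sub_nonneg.2 hk) k
  rw [sub_add_cancel] at h
  omega

lemma mul_volume_real_inter_window_add_add (I : Set ℝ) (h : ℝ) (n k : ℕ) (c d : ℝ) :
    c * volume.real (I ∩ (window h n ∩ window h (n + k)))
      + d * volume.real (I ∩ (window h (n + k) ∩ window h n))
      = (c + d) * volume.real (I ∩ window (h - k) n) := by
  rw [Set.inter_comm (window h (n + k)), window_inter_window_add]
  ring

lemma sum_sum_mul_volume_real_window_eq_sum_sum_mul_flen {x h : ℝ} (h0 : 0 < h) (hhx : h ≤ x)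
    (c : ℕ → ℕ → ℝ) :
    ∑ k ∈ Finset.Icc 1 (⌊2 * x + h⌋₊ - ⌊x⌋₊), ∑ n ∈ Finset.Ioc ⌊x⌋₊ (⌊2 * x + h⌋₊ - k),
        c n k * volume.real (Set.Ico x (2 * x) ∩ window (h - k) n)
      = ∑ k ∈ Finset.Icc 1 ⌊h⌋₊, ∑ n ∈ Finset.Ioc ⌊x⌋₊ ⌊2 * x + h - k⌋₊,
        c n k * flen n x (h - k) := by
  have hfloor : ⌊h⌋₊ ≤ ⌊2 * x + h⌋₊ - ⌊x⌋₊ := by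
    have := Nat.le_floor (a := 2 * x + h) (n := ⌊h⌋₊ + ⌊x⌋₊)
      (by push_cast; linarith [Nat.floor_le h0.le, Nat.floor_le (h0.le.trans hhx)])
    omega
  refine (Finset.sum_subset (Finset.Icc_subset_Icc_right hfloor) fun k hk hk' => ?_).symm.trans
    (Finset.sum_congr rfl fun k hk => ?_)
  · have hhk : h < k := (Nat.floor_lt h0.le).1 <| by rw [Finset.mem_Icc] at hk hk'; omega
    simp [window_eq_empty (sub_neg.2 hhk)]
  · have hkh : (k : ℝ) ≤ h := (Nat.le_floor_iff h0.le).1 (Finset.mem_Icc.1 hk).2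
    rw [Nat.floor_sub_natCast_of_le (by linarith)]
    exact Finset.sum_congr rfl fun n _ => by
      rw [flen_eq_volume_real (sub_nonneg.2 hkh) (by linarith)]

theorem lemma1_integral_identity (x h : ℝ) (h0 : 0 < h) (hhx : h ≤ x)
    (a b : ℕ → ℝ) :
    (∫ y in x..(2 * x),
        (∑ n ∈ Finset.Ioc ⌊y⌋₊ ⌊y + h⌋₊, a n) * (∑ m ∈ Finset.Ioc ⌊y⌋₊ ⌊y + h⌋₊, b m))
      = (∑ n ∈ Finset.Ioc ⌊x⌋₊ ⌊2 * x + h⌋₊, a n * b n * flen n x h)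
        + ∑ k ∈ Finset.Icc 1 ⌊h⌋₊,
            ∑ n ∈ Finset.Ioc ⌊x⌋₊ ⌊2 * x + h - k⌋₊,
              (a n * b (n + k) + a (n + k) * b n) * flen n x (h - k) := by
  have hx : 0 < x := h0.trans_le hhx
  have hexpand : Set.EqOn
      (fun y => (∑ n ∈ Finset.Ioc ⌊y⌋₊ ⌊y + h⌋₊, a n) * (∑ m ∈ Finset.Ioc ⌊y⌋₊ ⌊y + h⌋₊, b m))
      (fun y => ∑ n ∈ Finset.Ioc ⌊x⌋₊ ⌊2 * x + h⌋₊, ∑ m ∈ Finset.Ioc ⌊x⌋₊ ⌊2 * x + h⌋₊,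
        a n * b m * (window h n ∩ window h m).indicator (1 : ℝ → ℝ) y)
      (Set.uIcc x (2 * x)) := by
    intro y hy
    rw [Set.uIcc_of_le (by linarith), Set.mem_Icc] at hy
    exact sum_Ioc_floor_mul_sum_Ioc_floor (hx.le.trans hy.1) h
      (Finset.Ioc_subset_Ioc (Nat.floor_le_floor hy.1) (Nat.floor_le_floor (by linarith))) a b
  rw [intervalIntegral.integral_congr hexpand,
    intervalIntegral_sum_sum_mul_indicator (by linarith) _ _
      fun n m => (measurableSet_window h n).inter (measurableSet_window h m),
    sum_sum_eq_sum_diag_add_sum_sum_lt, sum_Ioc_sum_lt_eq_sum_Icc_sum_Ioc]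
  simp only [mul_volume_real_inter_window_add_add, Set.inter_self,
    sum_sum_mul_volume_real_window_eq_sum_sum_mul_flen h0 hhx, ← flen_eq_volume_real h0.le hhx]
end

section
/- Let x and h be real numbers with 0 < h ≤ x, let (c_n) be real numbers indexed by positive integers, and set C(u) = Σ_{n ≤ u} c_n. Then Σ_{x < n ≤ 2x+h} c_n·f(n,x,h) = ∫_{2x}^{2x+h} C(u) du − ∫_x^{x+h} C(u) du. -/
/-
Expanding `C(u) = ∑_{n ≤ N} c n · 1[n ≤ u]` turns `∫_a^b C` into `∑_n c n · |[a, b] ∩ [n, ∞)|`,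
and `f(n, x, h)` is exactly `|[2x, 2x+h] ∩ [n, ∞)| - |[x, x+h] ∩ [n, ∞)|`; for `n ≤ x` both
lengths equal `h`, so only `x < n ≤ 2x + h` contributes.
-/

open Finset ArithmeticFunction

open MeasureTheory

theorem intervalIntegral_indicator_Ici_const {a b : ℝ} (hab : a ≤ b) (t C : ℝ) :
    ∫ u in a..b, (Set.Ici t).indicator (fun _ => C) u = max (b - max a t) 0 * C := by
  have hvol : volume.real (Set.Ioc a b ∩ Set.Ici t) = max (b - max a t) 0 := by
    rw [measureReal_congr (ae_eq_refl _ |>.inter Ioi_ae_eq_Ici).symm, Set.Ioc_inter_Ioi,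
      Real.volume_real_Ioc]
  rw [intervalIntegral.integral_of_le hab, setIntegral_indicator measurableSet_Ici,
    setIntegral_const, hvol, smul_eq_mul]

theorem sum_Icc_floor_eq_sum_indicator {u : ℝ} (hu : 0 ≤ u) {N : ℕ} (hN : ⌊u⌋₊ ≤ N)
    (c : ℕ → ℝ) :
    ∑ n ∈ Icc 1 ⌊u⌋₊, c n = ∑ n ∈ Icc 1 N, (Set.Ici (n : ℝ)).indicator (fun _ => c n) u := by
  simp only [Set.indicator_apply, Set.mem_Ici, ← Finset.sum_filter]
  congr 1
  ext n
  simp only [Finset.mem_Icc, Finset.mem_filter, ← Nat.le_floor_iff hu]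
  exact ⟨fun h => ⟨⟨h.1, h.2.trans hN⟩, h.2⟩, fun h => ⟨h.1.1, h.2⟩⟩

theorem intervalIntegral_sum_Icc_floor {a b : ℝ} (ha : 0 ≤ a) (hab : a ≤ b) {N : ℕ}
    (hN : ⌊b⌋₊ ≤ N) (c : ℕ → ℝ) :
    ∫ u in a..b, ∑ n ∈ Icc 1 ⌊u⌋₊, c n = ∑ n ∈ Icc 1 N, max (b - max a n) 0 * c n := by
  have hsum : Set.EqOn (fun u => ∑ n ∈ Icc 1 ⌊u⌋₊, c n)
      (fun u => ∑ n ∈ Icc 1 N, (Set.Ici (n : ℝ)).indicator (fun _ => c n) u) (Set.uIcc a b) := by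
    intro u hu
    rw [Set.uIcc_of_le hab] at hu
    exact sum_Icc_floor_eq_sum_indicator (ha.trans hu.1) ((Nat.floor_le_floor hu.2).trans hN) c
  rw [intervalIntegral.integral_congr hsum, intervalIntegral.integral_finsetSum]
  · exact Finset.sum_congr rfl fun n _ => intervalIntegral_indicator_Ici_const hab n (c n)
  · intro n _
    rw [intervalIntegrable_iff]
    exact (integrableOn_const measure_Ioc_lt_top.ne).indicator measurableSet_Ici

theorem flen_eq_sub_max (n : ℕ) {x h : ℝ} (hh : 0 ≤ h) (hhx : h ≤ x) :
    flen n x h = max (2 * x + h - max (2 * x) n) 0 - max (x + h - max x n) 0 := by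
  unfold flen
  simp only [max_def]
  split_ifs <;> grind

theorem lemma2_summation_identity (x h : ℝ) (h0 : 0 < h) (hhx : h ≤ x)
    (c : ℕ → ℝ) :
    (∑ n ∈ Finset.Ioc ⌊x⌋₊ ⌊2 * x + h⌋₊, c n * flen n x h)
      = (∫ u in (2 * x)..(2 * x + h), ∑ n ∈ Finset.Icc 1 ⌊u⌋₊, c n)
        - ∫ u in x..(x + h), ∑ n ∈ Finset.Icc 1 ⌊u⌋₊, c n := by
  have hx : 0 ≤ x := by linarith
  rw [intervalIntegral_sum_Icc_floor (by linarith) (by linarith) le_rfl,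
    intervalIntegral_sum_Icc_floor hx (by linarith)
      (Nat.floor_le_floor (by linarith : x + h ≤ 2 * x + h)),
    ← sum_sub_distrib,
    show Icc 1 ⌊2 * x + h⌋₊ = Ioc 0 ⌊2 * x + h⌋₊ from Icc_add_one_left_eq_Ioc 0 _,
    ← sum_Ioc_consecutive _ (Nat.zero_le _)
      (Nat.floor_le_floor (by linarith : x ≤ 2 * x + h))]
  rw [sum_eq_zero (s := Ioc 0 ⌊x⌋₊) fun n hn => ?low, zero_add]
  · refine sum_congr rfl fun n _ => ?_
    rw [flen_eq_sub_max n h0.le hhx]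
    ring
  · have hnx : (n : ℝ) ≤ x := (Nat.le_floor_iff hx).mp (mem_Ioc.mp hn).2
    rw [max_eq_left hnx, max_eq_left (by linarith : (n : ℝ) ≤ 2 * x), add_sub_cancel_left,
      add_sub_cancel_left, sub_self]
end

section
/- There is a constant A > 0 such that for every integer k ≥ 2, Σ_{p | k} 1/√p ≤ A·√(log k)/(log log 3k), where the sum is over primes p dividing k. -/
open Finset ArithmeticFunction

/-!
Split the primes dividing `k` at `m = ⌊log k⌋`. A prime `p > m` has
`1 / √p ≤ log p / (√m log m)` because `x ↦ √x log x` is increasing, and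
`∑_{p ∣ k} log p ≤ log k`, so the large primes contribute `O(√(log k) / log m)`. The small ones
contribute at most `S(m) = ∑_{p ≤ m} 1 / √p`, and the same splitting of the primes up to `n` at
`n / 4`, with Chebyshev's bound `θ(n) ≤ n log 4` in place of `log k`, gives
`S(n) = O(√n / log n)` by induction. Finally `log log 3k ≤ 3 log m`.
-/

open Real Chebyshev

lemma sqrt_mul_log_le_sqrt_mul_log {x y : ℝ} (hx : 1 ≤ x) (hxy : x ≤ y) :
    √x * Real.log x ≤ √y * Real.log y :=
  mul_le_mul (sqrt_le_sqrt hxy) (log_le_log (by linarith) hxy) (log_nonneg hx) (sqrt_nonneg y)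

lemma sum_one_div_sqrt_le_sum_log_div {s : Finset ℕ} {y : ℝ} (hy : 1 < y)
    (hs : ∀ p ∈ s, y ≤ p) :
    ∑ p ∈ s, 1 / √(p : ℝ) ≤ (∑ p ∈ s, Real.log p) / (√y * Real.log y) := by
  rw [sum_div]
  refine sum_le_sum fun p hp => ?_
  have hyp := hs p hp
  have hy0 : 0 < √y * Real.log y := mul_pos (sqrt_pos.2 (by linarith)) (log_pos hy)
  rw [div_le_div_iff₀ (sqrt_pos.2 (by linarith)) hy0, one_mul, mul_comm (Real.log _)]
  exact sqrt_mul_log_le_sqrt_mul_log hy.le hyp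

lemma sum_log_primeFactors_le (k : ℕ) : ∑ p ∈ k.primeFactors, Real.log p ≤ Real.log k := by
  rcases k.eq_zero_or_pos with rfl | hk
  · simp
  have hpos (p : ℕ) (hp : p ∈ k.primeFactors) : (0 : ℝ) < p :=
    by exact_mod_cast (Nat.prime_of_mem_primeFactors hp).pos
  rw [← log_prod fun p hp => (hpos p hp).ne']
  refine log_le_log (prod_pos hpos) ?_
  rw [← Nat.cast_prod]
  exact Nat.cast_le.2 (Nat.le_of_dvd hk (Nat.prod_primeFactors_dvd k))

-- The `j = 0` term is `1 / √0 = 1 / 0 = 0`.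
lemma sum_range_one_div_sqrt_le (n : ℕ) :
    ∑ j ∈ range (n + 1), 1 / √(j : ℝ) ≤ 2 * √n := by
  induction n with
  | zero => simp
  | succ n ih =>
    rw [sum_range_succ]
    have hsucc : 0 < √((n : ℝ) + 1) := sqrt_pos.2 (by positivity)
    have hsq : √((n : ℝ) + 1) ^ 2 = n + 1 := sq_sqrt (by positivity)
    have hsq' : √(n : ℝ) ^ 2 = n := sq_sqrt n.cast_nonneg
    -- `2 (√(n+1) - √n) = 2 / (√(n+1) + √n)`
    have hstep : 1 / √((n : ℝ) + 1) ≤ 2 * (√((n : ℝ) + 1) - √n) := by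
      rw [div_le_iff₀ hsucc]
      nlinarith [sq_nonneg (√((n : ℝ) + 1) - √n), sqrt_nonneg (n : ℝ)]
    push_cast
    linarith

noncomputable def primeInvSqrtSum (n : ℕ) : ℝ := ∑ p ∈ Nat.primesLE n, 1 / √(p : ℝ)

lemma primeInvSqrtSum_le_two_mul_sqrt (n : ℕ) : primeInvSqrtSum n ≤ 2 * √n :=
  (sum_le_sum_of_subset_of_nonneg (filter_subset _ _) fun _ _ _ => by positivity).trans
    (sum_range_one_div_sqrt_le n)

lemma sum_one_div_sqrt_le_primeInvSqrtSum_add {s : Finset ℕ} (hs : ∀ p ∈ s, p.Prime) {m : ℕ}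
    (hm : 1 < m) {B : ℝ} (hB : ∑ p ∈ s, Real.log p ≤ B) :
    ∑ p ∈ s, 1 / √(p : ℝ) ≤ primeInvSqrtSum m + B / (√m * Real.log m) := by
  rw [← sum_filter_add_sum_filter_not s (· ≤ m)]
  have hlogm : 0 < √(m : ℝ) * Real.log m :=
    mul_pos (sqrt_pos.2 (by positivity)) (log_pos (by exact_mod_cast hm))
  gcongr ?_ + ?_
  · refine sum_le_sum_of_subset_of_nonneg (fun p hp => ?_) fun _ _ _ => by positivity
    rw [mem_filter] at hp
    exact Nat.mem_primesLE.2 ⟨hp.2, hs p hp.1⟩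
  · have hlarge (p : ℕ) (hp : p ∈ s.filter (¬ · ≤ m)) : (m : ℝ) ≤ p :=
      by exact_mod_cast (not_le.1 (mem_filter.1 hp).2).le
    refine (sum_one_div_sqrt_le_sum_log_div (by exact_mod_cast hm) hlarge).trans ?_
    refine div_le_div_of_nonneg_right (le_trans ?_ hB) hlogm.le
    exact sum_le_sum_of_subset_of_nonneg (filter_subset _ _) fun p hp _ =>
      log_nonneg (by exact_mod_cast (hs p hp).one_lt.le)

lemma primeInvSqrtSum_le_add {m n : ℕ} (hm : 1 < m) (hn : n ≤ 9 * m) :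
    primeInvSqrtSum n ≤ primeInvSqrtSum m + 9 * √n / Real.log m := by
  have hlogm : 0 < Real.log m := log_pos (by exact_mod_cast hm)
  have htheta : ∑ p ∈ Nat.primesLE n, Real.log p ≤ Real.log 4 * n := by
    rw [← theta_eq_sum_primesLE_log]; exact theta_le_log4_mul_x n.cast_nonneg
  have hsqrt : √(n : ℝ) ≤ 3 * √m := by
    rw [← sqrt_sq (show (0 : ℝ) ≤ 3 by norm_num), ← sqrt_mul (by norm_num)]
    exact sqrt_le_sqrt (by norm_num; exact_mod_cast hn)
  have hlog4 : Real.log 4 ≤ 3 := by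
    linarith [log_le_sub_one_of_pos (show (0 : ℝ) < 4 by norm_num)]
  have hnum : Real.log 4 * n ≤ 9 * √n * √m :=
    calc Real.log 4 * n ≤ 3 * (√n * √n) := by rw [mul_self_sqrt n.cast_nonneg]; gcongr
      _ ≤ 3 * (√n * (3 * √m)) := by gcongr
      _ = 9 * √n * √m := by ring
  calc primeInvSqrtSum n ≤ primeInvSqrtSum m + Real.log 4 * n / (√m * Real.log m) :=
        sum_one_div_sqrt_le_primeInvSqrtSum_add (fun p hp => (Nat.mem_primesLE.1 hp).2) hm htheta
    _ ≤ primeInvSqrtSum m + 9 * √n * √m / (√m * Real.log m) := by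
        have : 0 < √(m : ℝ) := sqrt_pos.2 (by positivity)
        gcongr
    _ = primeInvSqrtSum m + 9 * √n / Real.log m := by
        have : 0 < √(m : ℝ) := sqrt_pos.2 (by positivity)
        field_simp

lemma primeInvSqrtSum_le (n : ℕ) (hn : 2 ≤ n) :
    primeInvSqrtSum n ≤ 100 * √n / Real.log n := by
  induction n using Nat.strong_induction_on with
  | _ n ih =>
  have hn' : (2 : ℝ) ≤ n := by exact_mod_cast hn
  have hlogn : 0 < Real.log n := log_pos (by linarith)
  by_cases hsmall : Real.log n ≤ 50
  · calc primeInvSqrtSum n ≤ 2 * √n := primeInvSqrtSum_le_two_mul_sqrt n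
      _ ≤ 100 * √n / Real.log n := by
          rw [le_div_iff₀ hlogn]; nlinarith [sqrt_nonneg (n : ℝ)]
  push Not at hsmall
  have h8 : 8 ≤ n := by
    by_contra! h
    have : (n : ℝ) < 8 := by exact_mod_cast h
    linarith [log_le_sub_one_of_pos (show (0 : ℝ) < n by linarith)]
  set m := n / 4
  have hm : 2 ≤ m := by omega
  have hlogm : 0 < Real.log m := log_pos (by exact_mod_cast hm)
  have h9m : (n : ℝ) ≤ 9 * m := by exact_mod_cast (by omega : n ≤ 9 * m)
  have hsqrt : 2 * √(m : ℝ) ≤ √n := by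
    rw [← sqrt_sq (show (0 : ℝ) ≤ 2 by norm_num), ← sqrt_mul (by norm_num)]
    exact sqrt_le_sqrt (by norm_num; exact_mod_cast (by omega : 4 * m ≤ n))
  have hlog_m : Real.log n - 8 ≤ Real.log m := by
    have h1 : Real.log n ≤ Real.log 9 + Real.log m := by
      rw [← log_mul (by norm_num) (by positivity)]; exact log_le_log (by linarith) h9m
    linarith [log_le_sub_one_of_pos (show (0 : ℝ) < 9 by norm_num)]
  calc primeInvSqrtSum n ≤ primeInvSqrtSum m + 9 * √n / Real.log m :=
        primeInvSqrtSum_le_add (by omega) (by omega)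
    _ ≤ 100 * √m / Real.log m + 9 * √n / Real.log m := by gcongr; exact ih m (by omega) hm
    _ ≤ 59 * √n / Real.log m := by rw [← add_div]; gcongr; linarith
    _ ≤ 100 * √n / Real.log n := by
        rw [div_le_div_iff₀ hlogm hlogn]
        nlinarith [sqrt_nonneg (n : ℝ)]

lemma log_log_three_mul_pos {x : ℝ} (hx : 1 ≤ x) : 0 < Real.log (Real.log (3 * x)) :=
  log_pos <| (lt_log_iff_exp_lt (by linarith)).2 (by linarith [exp_one_lt_three])

lemma sum_primeFactors_one_div_sqrt_le_of_log_lt_two {k : ℕ} (hk : 2 ≤ k)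
    (hL : Real.log k < 2) :
    ∑ p ∈ k.primeFactors, 1 / √(p : ℝ) ≤
      2 * √(Real.log k) / Real.log (Real.log (3 * k)) := by
  have hk' : (2 : ℝ) ≤ k := by exact_mod_cast hk
  have hL0 : 0 < Real.log k := log_pos (by linarith)
  have hlog3 : Real.log 3 ≤ 2 := by
    linarith [log_le_sub_one_of_pos (show (0 : ℝ) < 3 by norm_num)]
  have hloglog : Real.log (Real.log (3 * k)) ≤ Real.log 4 := by
    have hlog3k : Real.log (3 * k) = Real.log 3 + Real.log k :=
      log_mul (by norm_num) (by positivity)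
    refine log_le_log ?_ ?_ <;> linarith [log_pos (show (1 : ℝ) < 3 by norm_num)]
  have hsqrtL : Real.log k ≤ √2 * √(Real.log k) := by
    nth_rewrite 1 [← mul_self_sqrt hL0.le]
    gcongr
  calc ∑ p ∈ k.primeFactors, 1 / √(p : ℝ)
      ≤ (∑ p ∈ k.primeFactors, Real.log p) / (√2 * Real.log 2) :=
        sum_one_div_sqrt_le_sum_log_div one_lt_two fun p hp =>
          by exact_mod_cast (Nat.prime_of_mem_primeFactors hp).two_le
    _ ≤ √2 * √(Real.log k) / (√2 * Real.log 2) := by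
        gcongr
        exact (sum_log_primeFactors_le k).trans hsqrtL
    _ = 2 * √(Real.log k) / Real.log 4 := by
        rw [show (4 : ℝ) = 2 ^ 2 by norm_num, Real.log_pow]
        field_simp
        ring
    _ ≤ 2 * √(Real.log k) / Real.log (Real.log (3 * k)) := by
        gcongr
        exact log_log_three_mul_pos (by linarith)

lemma sum_primeFactors_one_div_sqrt_le_of_two_le_floor_log {k : ℕ}
    (hm : 2 ≤ ⌊Real.log k⌋₊) :
    ∑ p ∈ k.primeFactors, 1 / √(p : ℝ) ≤
      306 * √(Real.log k) / Real.log (Real.log (3 * k)) := by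
  set L := Real.log k
  set m := ⌊L⌋₊
  have hL1 : 1 ≤ L := Nat.floor_pos.1 (by omega)
  have hk : (1 : ℝ) ≤ k := by
    by_contra! h
    have : L ≤ 0 := log_nonpos (by positivity) h.le
    linarith
  have hm' : (2 : ℝ) ≤ m := by exact_mod_cast hm
  have hmL : (m : ℝ) ≤ L := Nat.floor_le (by linarith)
  have hLm : L < m + 1 := Nat.lt_floor_add_one L
  have hlogm : 0 < Real.log m := log_pos (by linarith)
  have hsqrt_L : √L ≤ 2 * √m := by
    rw [← sqrt_sq (show (0 : ℝ) ≤ 2 by norm_num), ← sqrt_mul (by norm_num)]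
    exact sqrt_le_sqrt (by linarith)
  have htail : L / (√m * Real.log m) ≤ 2 * √L / Real.log m := by
    have hnum : L ≤ 2 * √L * √m :=
      calc L = √L * √L := (mul_self_sqrt (by linarith)).symm
        _ ≤ √L * (2 * √m) := by gcongr
        _ = 2 * √L * √m := by ring
    calc L / (√m * Real.log m) ≤ 2 * √L * √m / (√m * Real.log m) := by gcongr
      _ = 2 * √L / Real.log m := by field_simp
  -- `log (3k) = log 3 + L < m + 3 ≤ m³`
  have hloglog : Real.log (Real.log (3 * k)) ≤ 3 * Real.log m := by
    have hlog3k : Real.log (3 * k) = Real.log 3 + L := log_mul (by norm_num) (by positivity)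
    have hlog3 : Real.log 3 ≤ 2 := by
      linarith [log_le_sub_one_of_pos (show (0 : ℝ) < 3 by norm_num)]
    rw [show 3 * Real.log m = Real.log ((m : ℝ) ^ 3) by rw [Real.log_pow]; norm_num]
    refine log_le_log (by linarith [log_nonneg (show (1 : ℝ) ≤ 3 by norm_num)]) ?_
    have hcube : 4 * (m : ℝ) ≤ m ^ 3 := by
      nlinarith [mul_le_mul hm' hm' zero_le_two (by linarith)]
    linarith
  calc ∑ p ∈ k.primeFactors, 1 / √(p : ℝ)
      ≤ primeInvSqrtSum m + L / (√m * Real.log m) :=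
        sum_one_div_sqrt_le_primeInvSqrtSum_add (fun p hp => Nat.prime_of_mem_primeFactors hp)
          (by omega) (sum_log_primeFactors_le k)
    _ ≤ 100 * √L / Real.log m + 2 * √L / Real.log m :=
        add_le_add ((primeInvSqrtSum_le m hm).trans (by gcongr)) htail
    _ = 306 * √L / (3 * Real.log m) := by field_simp; ring
    _ ≤ 306 * √L / Real.log (Real.log (3 * k)) := by
        gcongr
        exact log_log_three_mul_pos hk

theorem lemma4_inv_sqrt_prime_bound :
    ∃ A : ℝ, 0 < A ∧ ∀ k : ℕ, 2 ≤ k →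
      (∑ p ∈ k.primeFactors, 1 / Real.sqrt p)
        ≤ A * Real.sqrt (Real.log k) / Real.log (Real.log (3 * k)) := by
  refine ⟨306, by norm_num, fun k hk => ?_⟩
  rcases le_or_gt 2 ⌊Real.log k⌋₊ with hm | hm
  · exact sum_primeFactors_one_div_sqrt_le_of_two_le_floor_log hm
  · have hL : Real.log k < 2 := by exact_mod_cast (Nat.floor_lt' (by norm_num)).1 hm
    refine (sum_primeFactors_one_div_sqrt_le_of_log_lt_two hk hL).trans ?_
    have hk' : (1 : ℝ) ≤ k := by exact_mod_cast (by omega : 1 ≤ k)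
    gcongr
    · exact (log_log_three_mul_pos hk').le
    · norm_num
end

section
/- For every positive integer k, Σ_{ℓ | k} (μ²(ℓ)/φ(ℓ))·log ℓ = (k/φ(k))·v(k). -/
open Finset ArithmeticFunction

/-! On a squarefree `ℓ` we have `μ(ℓ)²/φ(ℓ) = ∏_{p ∣ ℓ} (p - 1)⁻¹` and `log ℓ = ∑_{p ∣ ℓ} log p`, so
the sum runs over the subsets `S` of the set `P` of prime factors of `k`, of
`(∏_{p ∈ S} a p) · ∑_{p ∈ S} log p` with `a p = (p - 1)⁻¹`. Collecting the subsets that contain a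
given `p` leaves `log p · a p · ∏_{q ∈ P, q ≠ p} (1 + a q)`, and `1 + a q = q/(q - 1)`, while
`k/φ(k) = ∏_{q ∈ P} q/(q - 1)` by Euler's product formula. -/

namespace Finset

variable {ι R : Type*} [DecidableEq ι] [CommSemiring R]

theorem sum_powerset_filter_mem_prod {s : Finset ι} {i : ι} (hi : i ∈ s) (a : ι → R) :
    ∑ t ∈ s.powerset with i ∈ t, ∏ j ∈ t, a j = a i * ∏ j ∈ s.erase i, (1 + a j) := by
  have hnot : ∀ t ∈ (s.erase i).powerset, i ∉ t := fun t ht =>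
    notMem_mono (mem_powerset.1 ht) (notMem_erase i s)
  rw [sum_filter, ← insert_erase hi, sum_powerset_insert (notMem_erase i s),
    erase_insert_eq_erase, erase_idem, sum_eq_zero fun t ht => if_neg (hnot t ht), zero_add,
    prod_one_add, mul_sum]
  exact sum_congr rfl fun t ht => by rw [if_pos (mem_insert_self i t), prod_insert (hnot t ht)]

theorem sum_powerset_prod_mul_sum (s : Finset ι) (a b : ι → R) :
    ∑ t ∈ s.powerset, (∏ j ∈ t, a j) * ∑ i ∈ t, b i =
      ∑ i ∈ s, b i * a i * ∏ j ∈ s.erase i, (1 + a j) := by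
  calc ∑ t ∈ s.powerset, (∏ j ∈ t, a j) * ∑ i ∈ t, b i
      = ∑ t ∈ s.powerset, ∑ i ∈ s, if i ∈ t then b i * ∏ j ∈ t, a j else 0 := by
        refine sum_congr rfl fun t ht => ?_
        rw [sum_ite_mem, inter_eq_right.2 (mem_powerset.1 ht), mul_sum]
        simp only [mul_comm]
    _ = ∑ i ∈ s, b i * ∑ t ∈ s.powerset with i ∈ t, ∏ j ∈ t, a j := by
        simp only [sum_comm (s := s.powerset), mul_sum, sum_filter, mul_ite, mul_zero]
    _ = _ := sum_congr rfl fun i hi => by rw [sum_powerset_filter_mem_prod hi, mul_assoc]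

end Finset

namespace Nat

theorem sum_divisors_filter_squarefree_eq_sum_powerset_primeFactors {n : ℕ} (hn : n ≠ 0)
    {α : Type*} [AddCommMonoid α] (f : ℕ → α) :
    ∑ d ∈ n.divisors with Squarefree d, f d = ∑ s ∈ n.primeFactors.powerset, f (∏ p ∈ s, p) := by
  have h : (UniqueFactorizationMonoid.normalizedFactors n).toFinset = n.primeFactors := by
    rw [factors_eq]; rfl
  rw [sum_divisors_filter_squarefree hn, h]
  simp only [prod_val, id]

theorem totient_eq_prod_primeFactors_sub_one {n : ℕ} (hn : Squarefree n) :
    φ n = ∏ p ∈ n.primeFactors, (p - 1) := by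
  have h := totient_mul_prod_primeFactors n
  rw [prod_primeFactors_of_squarefree hn, mul_comm] at h
  exact Nat.eq_of_mul_eq_mul_left (Nat.pos_of_ne_zero hn.ne_zero) h

theorem cast_div_totient_eq_prod_primeFactors {K : Type*} [Field K] [CharZero K] {n : ℕ}
    (hn : n ≠ 0) : (n : K) / φ n = ∏ p ∈ n.primeFactors, (p : K) / (p - 1) := by
  have hsub : ∀ p ∈ n.primeFactors, ((p - 1 : ℕ) : K) = p - 1 := fun p hp =>
    Nat.cast_pred (pos_of_mem_primeFactors hp)
  have h := congrArg (Nat.cast : ℕ → K) (totient_mul_prod_primeFactors n)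
  push_cast [prod_congr rfl hsub] at h
  have hφ : (φ n : K) ≠ 0 := by exact_mod_cast (totient_pos.2 (Nat.pos_of_ne_zero hn)).ne'
  have hprod : ∏ p ∈ n.primeFactors, ((p : K) - 1) ≠ 0 := prod_ne_zero_iff.2 fun p hp =>
    sub_ne_zero.2 (by exact_mod_cast (prime_of_mem_primeFactors hp).ne_one)
  rw [prod_div_distrib, div_eq_div_iff hφ hprod, ← h, mul_comm]

theorem log_eq_sum_primeFactors_of_squarefree {n : ℕ} (hn : Squarefree n) :
    Real.log n = ∑ p ∈ n.primeFactors, Real.log p := by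
  conv_lhs => rw [← prod_primeFactors_of_squarefree hn]
  rw [cast_prod, Real.log_prod fun p hp => cast_ne_zero.2 (pos_of_mem_primeFactors hp).ne']

theorem moebius_sq_div_totient_mul_log_eq (n : ℕ) :
    ((moebius n : ℝ) ^ 2 / φ n) * Real.log n = if Squarefree n then
      (∏ p ∈ n.primeFactors, ((p : ℝ) - 1)⁻¹) * ∑ p ∈ n.primeFactors, Real.log p else 0 := by
  split_ifs with hn
  · have hsub : ∀ p ∈ n.primeFactors, ((p - 1 : ℕ) : ℝ) = p - 1 := fun p hp =>
      Nat.cast_pred (pos_of_mem_primeFactors hp)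
    rw [← Int.cast_pow, moebius_sq_eq_one_of_squarefree hn, totient_eq_prod_primeFactors_sub_one hn,
      cast_prod, prod_congr rfl hsub, Int.cast_one, one_div, prod_inv_distrib,
      log_eq_sum_primeFactors_of_squarefree hn]
  · rw [moebius_eq_zero_of_not_squarefree hn]
    simp

end Nat

theorem lemma5_divisor_log_identity (k : ℕ) (hk : 1 ≤ k) :
    (∑ ℓ ∈ k.divisors,
        ((ArithmeticFunction.moebius ℓ : ℝ) ^ 2 / (ℓ.totient : ℝ)) * Real.log ℓ)
      = ((k : ℝ) / (k.totient : ℝ)) * vGY k := by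
  have hk0 : k ≠ 0 := Nat.one_le_iff_ne_zero.1 hk
  calc _ = ∑ ℓ ∈ k.divisors with Squarefree ℓ,
        (∏ p ∈ ℓ.primeFactors, ((p : ℝ) - 1)⁻¹) * ∑ p ∈ ℓ.primeFactors, Real.log p := by
        simp only [Nat.moebius_sq_div_totient_mul_log_eq, sum_filter]
    _ = ∑ s ∈ k.primeFactors.powerset, (∏ p ∈ s, ((p : ℝ) - 1)⁻¹) * ∑ p ∈ s, Real.log p := by
        rw [Nat.sum_divisors_filter_squarefree_eq_sum_powerset_primeFactors hk0]
        exact sum_congr rfl fun s hs => by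
          rw [Nat.primeFactors_prod fun p hp =>
            Nat.prime_of_mem_primeFactors (mem_powerset.1 hs hp)]
    _ = ∑ p ∈ k.primeFactors,
          Real.log p * ((p : ℝ) - 1)⁻¹ * ∏ q ∈ k.primeFactors.erase p, (1 + ((q : ℝ) - 1)⁻¹) :=
        sum_powerset_prod_mul_sum _ _ _
    _ = _ := by
        rw [vGY, mul_sum, Nat.cast_div_totient_eq_prod_primeFactors hk0]
        refine sum_congr rfl fun p hp => ?_
        have hsub : ∀ q ∈ k.primeFactors, (q : ℝ) - 1 ≠ 0 := fun q hq =>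
          sub_ne_zero.2 (by exact_mod_cast (Nat.prime_of_mem_primeFactors hq).ne_one)
        have hp0 : (p : ℝ) ≠ 0 := by exact_mod_cast (Nat.pos_of_mem_primeFactors hp).ne'
        rw [← mul_prod_erase _ _ hp, prod_congr rfl fun q hq => by
          rw [inv_eq_one_div, one_add_div (hsub q (mem_of_mem_erase hq)), sub_add_cancel]]
        field_simp [hsub p hp]
end

section
/- For every squarefree positive integer r and every positive integer k, Σ_{d | r, gcd(d,k) = 1} d·μ(d)/φ(d) = (μ(r)/φ(r))·μ(gcd(r,k))·φ(gcd(r,k)). -/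
open Finset ArithmeticFunction

/-!
Write `g = gcd(r, k)` and `m = r / g`. Since `r` is squarefree, `m` and `g` are coprime, and the
divisors of `r` coprime to `k` are exactly the divisors of `m`. For squarefree `m`,
`∑_{d ∣ m} μ(d) d/φ(d) = ∏_{p ∣ m} (1 - p/(p-1)) = ∏_{p ∣ m} μ(p)/φ(p) = μ(m)/φ(m)`.
Finally `μ(r)/φ(r) = (μ(m)/φ(m)) (μ(g)/φ(g))` by multiplicativity, and `μ(g)² = 1`.
-/

open scoped ArithmeticFunction.Moebius

noncomputable def totientReal : ArithmeticFunction ℝ := ⟨fun n => n.totient, by simp⟩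

@[simp]
lemma totientReal_apply (n : ℕ) : totientReal n = n.totient := rfl

lemma isMultiplicative_totientReal : totientReal.IsMultiplicative :=
  ⟨by simp, fun h => by simp [Nat.totient_mul h]⟩

lemma totientReal_apply_prime {p : ℕ} (hp : p.Prime) : totientReal p = p - 1 := by
  rw [totientReal_apply, Nat.totient_prime hp, Nat.cast_pred hp.pos]

lemma isMultiplicative_moebius_div_totient :
    (pdiv (μ : ArithmeticFunction ℝ) totientReal).IsMultiplicative :=
  isMultiplicative_moebius.intCast.pdiv isMultiplicative_totientReal

lemma sum_divisors_mul_moebius_div_totient {n : ℕ} (hn : Squarefree n) :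
    ∑ d ∈ n.divisors, (d : ℝ) * (μ d : ℝ) / (d.totient : ℝ)
      = (μ n : ℝ) / (n.totient : ℝ) := by
  have hf := isMultiplicative_id.natCast.pdiv isMultiplicative_totientReal (R := ℝ)
  have hg := isMultiplicative_moebius_div_totient
  have hprime : ∀ p ∈ n.primeFactors,
      1 - pdiv (ArithmeticFunction.id : ArithmeticFunction ℝ) totientReal p
        = pdiv (μ : ArithmeticFunction ℝ) totientReal p := by
    intro p hp
    have hp := Nat.prime_of_mem_primeFactors hp
    have hp1 : (p : ℝ) - 1 ≠ 0 := sub_ne_zero.mpr (by exact_mod_cast hp.one_lt.ne')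
    simp only [pdiv_apply, natCoe_apply, id_apply, intCoe_apply, totientReal_apply_prime hp,
      moebius_apply_prime hp]
    field_simp
    ring
  calc ∑ d ∈ n.divisors, (d : ℝ) * (μ d : ℝ) / (d.totient : ℝ)
      = ∑ d ∈ n.divisors, (μ d : ℝ) * pdiv (ArithmeticFunction.id : ArithmeticFunction ℝ)
          totientReal d := by
        refine sum_congr rfl fun d _ => ?_
        simp only [pdiv_apply, natCoe_apply, id_apply, totientReal_apply]
        ring
    _ = ∏ p ∈ n.primeFactors, pdiv (μ : ArithmeticFunction ℝ) totientReal p := by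
        rw [← hf.prodPrimeFactors_one_sub_of_squarefree _ hn, prod_congr rfl hprime]
    _ = (μ n : ℝ) / (n.totient : ℝ) := by
        rw [← hg.map_prod_of_prime _ fun p => Nat.prime_of_mem_primeFactors,
          Nat.prod_primeFactors_of_squarefree hn]
        simp

lemma coprime_div_gcd_gcd_of_squarefree {r : ℕ} (hr : Squarefree r) (k : ℕ) :
    Nat.Coprime (r / r.gcd k) (r.gcd k) :=
  Nat.coprime_of_squarefree_mul (by rwa [Nat.div_mul_cancel (Nat.gcd_dvd_left r k)])

lemma filter_divisors_coprime_eq_divisors_div_gcd {r : ℕ} (hr : Squarefree r) (k : ℕ) :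
    r.divisors.filter (fun d => Nat.gcd d k = 1) = (r / r.gcd k).divisors := by
  have hmg : r / r.gcd k * r.gcd k = r := Nat.div_mul_cancel (Nat.gcd_dvd_left r k)
  have hm : r / r.gcd k ≠ 0 := fun h => hr.ne_zero (by rw [← hmg, h, zero_mul])
  ext d
  simp only [mem_filter, Nat.mem_divisors, hr.ne_zero, hm, ne_eq, not_false_eq_true, and_true]
  constructor
  · rintro ⟨hdr, hdk⟩
    have hdg : Nat.Coprime d (r.gcd k) := Nat.Coprime.coprime_dvd_right (Nat.gcd_dvd_right r k) hdk
    exact hdg.dvd_of_dvd_mul_right (hmg.symm ▸ hdr)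
  · intro hdm
    have hdr : d ∣ r := hdm.trans (Dvd.intro _ hmg)
    refine ⟨hdr, ?_⟩
    -- a common divisor of `d` and `k` divides both coprime factors `r / gcd r k` and `gcd r k`
    exact Nat.eq_one_of_dvd_coprimes (coprime_div_gcd_gcd_of_squarefree hr k)
      ((Nat.gcd_dvd_left d k).trans hdm)
      (Nat.dvd_gcd ((Nat.gcd_dvd_left d k).trans hdr) (Nat.gcd_dvd_right d k))

theorem divisor_sum_coprime_identity_general (r k : ℕ) (hr : Squarefree r) :
    (∑ d ∈ r.divisors.filter (fun d => Nat.gcd d k = 1),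
        (d : ℝ) * (ArithmeticFunction.moebius d : ℝ) / (d.totient : ℝ))
      = ((ArithmeticFunction.moebius r : ℝ) / (r.totient : ℝ))
          * (ArithmeticFunction.moebius (Nat.gcd r k) : ℝ)
          * ((Nat.gcd r k).totient : ℝ) := by
  set g := Nat.gcd r k
  set m := r / g
  have hmg : m * g = r := Nat.div_mul_cancel (Nat.gcd_dvd_left r k)
  have hcop : Nat.Coprime m g := coprime_div_gcd_gcd_of_squarefree hr k
  have hg : Squarefree g := hr.squarefree_of_dvd (Nat.gcd_dvd_left r k)
  have hμg : (μ g : ℝ) ^ 2 = 1 := by exact_mod_cast moebius_sq_eq_one_of_squarefree hg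
  have hφg : (g.totient : ℝ) ≠ 0 := by
    exact_mod_cast (Nat.totient_pos.mpr hg.ne_zero.bot_lt).ne'
  have hsplit : (μ r : ℝ) / r.totient = μ m / m.totient * (μ g / g.totient) := by
    simpa [hmg] using isMultiplicative_moebius_div_totient.map_mul_of_coprime hcop
  rw [filter_divisors_coprime_eq_divisors_div_gcd hr,
    sum_divisors_mul_moebius_div_totient (hr.squarefree_of_dvd (Dvd.intro _ hmg)), hsplit]
  field_simp
  rw [hμg, mul_one]

theorem divisor_sum_coprime_identity (r k : ℕ) (hr : Squarefree r) (hk : 1 ≤ k) :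
    (∑ d ∈ r.divisors.filter (fun d => Nat.gcd d k = 1),
        (d : ℝ) * (ArithmeticFunction.moebius d : ℝ) / (d.totient : ℝ))
      = ((ArithmeticFunction.moebius r : ℝ) / (r.totient : ℝ))
          * (ArithmeticFunction.moebius (Nat.gcd r k) : ℝ)
          * ((Nat.gcd r k).totient : ℝ) :=
  divisor_sum_coprime_identity_general r k hr
end

section
/- There is a constant A > 0 such that for every real R ≥ 1, Σ_{r ≤ R} μ²(r)·σ(r)/φ(r) ≤ A·R, where σ(r) is the sum of the divisors of r. -/
open Finset ArithmeticFunction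

/-! For squarefree `r`, `σ(r)/φ(r) = ∏_{p ∣ r} (1 + 2/(p-1)) = ∑_{d ∣ r} g(d)` with the
multiplicative `g(d) = ∏_{p ∣ d} 2/(p-1)`. Exchanging the order of summation bounds the sum by
`R ∑_{d ≤ R} μ²(d) g(d)/d`, and a sum over squarefree `d ≤ R` of a nonnegative multiplicative
function is at most its Euler product over the primes `p ≤ R`; here that product is
`∏_{p ≤ R} (1 + 2/(p(p-1))) ≤ exp (∑_p 4/p²) ≤ exp (2π²/3)`. -/

open Real
open scoped ArithmeticFunction.Moebius

noncomputable def sigmaTotientKernel : ArithmeticFunction ℝ :=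
  prodPrimeFactors fun p => 2 / ((p : ℝ) - 1)

lemma isMultiplicative_sigmaTotientKernel : sigmaTotientKernel.IsMultiplicative :=
  IsMultiplicative.prodPrimeFactors _

lemma sigmaTotientKernel_apply_prime {p : ℕ} (hp : p.Prime) :
    sigmaTotientKernel p = 2 / ((p : ℝ) - 1) := by
  rw [sigmaTotientKernel, prodPrimeFactors_apply hp.ne_zero, hp.primeFactors, prod_singleton]

lemma sigmaTotientKernel_nonneg (n : ℕ) : 0 ≤ sigmaTotientKernel n := by
  rcases eq_or_ne n 0 with rfl | hn
  · simp
  rw [sigmaTotientKernel, prodPrimeFactors_apply hn]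
  refine prod_nonneg fun p hp => div_nonneg zero_le_two (sub_nonneg.mpr ?_)
  exact_mod_cast (Nat.prime_of_mem_primeFactors hp).one_lt.le

lemma Nat.totient_eq_prod_primeFactors_of_squarefree {n : ℕ} (hn : Squarefree n) :
    n.totient = ∏ p ∈ n.primeFactors, (p - 1) := by
  have h := Nat.totient_mul_prod_primeFactors n
  rw [Nat.prod_primeFactors_of_squarefree hn, mul_comm] at h
  exact Nat.eq_of_mul_eq_mul_left (Nat.pos_of_ne_zero hn.ne_zero) h

lemma Nat.sum_divisors_eq_prod_primeFactors_of_squarefree {n : ℕ} (hn : Squarefree n) :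
    ∑ d ∈ n.divisors, d = ∏ p ∈ n.primeFactors, (1 + p) :=
  (isMultiplicative_id.prodPrimeFactors_one_add_of_squarefree hn).symm

lemma sum_divisors_div_totient_eq_sum_sigmaTotientKernel {r : ℕ} (hr : Squarefree r) :
    (∑ d ∈ r.divisors, (d : ℝ)) / r.totient = ∑ d ∈ r.divisors, sigmaTotientKernel d := by
  rw [← isMultiplicative_sigmaTotientKernel.prodPrimeFactors_one_add_of_squarefree hr,
    ← Nat.cast_sum, Nat.sum_divisors_eq_prod_primeFactors_of_squarefree hr,
    Nat.totient_eq_prod_primeFactors_of_squarefree hr, Nat.cast_prod, Nat.cast_prod,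
    ← prod_div_distrib]
  refine prod_congr rfl fun p hp => ?_
  have hp := Nat.prime_of_mem_primeFactors hp
  have hp1 : (p : ℝ) - 1 ≠ 0 := sub_ne_zero.mpr (by exact_mod_cast hp.one_lt.ne')
  rw [sigmaTotientKernel_apply_prime hp]
  push_cast [Nat.cast_sub hp.one_lt.le]
  field_simp
  ring

lemma moebius_sq_mul_sum_divisors_div_totient_le (r : ℕ) :
    (μ r : ℝ) ^ 2 * (∑ d ∈ r.divisors, (d : ℝ)) / r.totient ≤
      ∑ d ∈ r.divisors, (μ d : ℝ) ^ 2 * sigmaTotientKernel d := by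
  by_cases hr : Squarefree r
  · have hμ (d : ℕ) (hd : Squarefree d) : (μ d : ℝ) ^ 2 = 1 := by
      exact_mod_cast moebius_sq_eq_one_of_squarefree hd
    rw [hμ r hr, one_mul, sum_divisors_div_totient_eq_sum_sigmaTotientKernel hr]
    refine (sum_congr rfl fun d hd => ?_).le
    rw [hμ d (hr.squarefree_of_dvd (Nat.dvd_of_mem_divisors hd)), one_mul]
  · rw [moebius_eq_zero_of_not_squarefree hr]
    simpa using sum_nonneg fun d _ => mul_nonneg (sq_nonneg _) (sigmaTotientKernel_nonneg d)

lemma sum_Ioc_sum_divisors_le {f : ℕ → ℝ} (hf : ∀ n, 0 ≤ f n) (N : ℕ) :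
    ∑ n ∈ Ioc 0 N, ∑ d ∈ n.divisors, f d ≤ N * ∑ d ∈ Ioc 0 N, f d / d := by
  have hswap : ∑ n ∈ Ioc 0 N, ∑ d ∈ n.divisors, f d =
      ∑ d ∈ Ioc 0 N, ∑ n ∈ Ioc 0 N with d ∣ n, f d := by
    refine sum_comm' fun n d => ?_
    simp only [mem_Ioc, Nat.mem_divisors, mem_filter]
    constructor
    · rintro ⟨⟨hn, hnN⟩, hdn, -⟩
      exact ⟨⟨⟨hn, hnN⟩, hdn⟩, Nat.pos_of_dvd_of_pos hdn hn, (Nat.le_of_dvd hn hdn).trans hnN⟩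
    · rintro ⟨⟨⟨hn, hnN⟩, hdn⟩, -⟩
      exact ⟨⟨hn, hnN⟩, hdn, hn.ne'⟩
  rw [hswap, mul_sum]
  refine sum_le_sum fun d hd => ?_
  rw [sum_const, Nat.Ioc_filter_dvd_card_eq_div, nsmul_eq_mul]
  calc ((N / d : ℕ) : ℝ) * f d ≤ (N / d : ℝ) * f d := by
        gcongr
        · exact hf d
        · exact Nat.cast_div_le
    _ = N * (f d / d) := by ring

lemma sum_Ioc_moebius_sq_mul_le_prod_primesLE {f : ArithmeticFunction ℝ}
    (hf : f.IsMultiplicative) (hf0 : ∀ n, 0 ≤ f n) (N : ℕ) :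
    ∑ d ∈ Ioc 0 N, (μ d : ℝ) ^ 2 * f d ≤ ∏ p ∈ Nat.primesLE N, (1 + f p) := by
  have hsub : {d ∈ Ioc 0 N | Squarefree d} ⊆ (primorial N).divisors := by
    intro d hd
    simp only [mem_filter, mem_Ioc] at hd
    exact Nat.mem_divisors.mpr ⟨hd.2.dvd_primorial.trans (primorial_dvd_primorial hd.1.2),
      primorial_ne_zero N⟩
  calc ∑ d ∈ Ioc 0 N, (μ d : ℝ) ^ 2 * f d = ∑ d ∈ Ioc 0 N with Squarefree d, f d := by
        rw [sum_filter]
        refine sum_congr rfl fun d _ => ?_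
        rw [← Int.cast_pow, moebius_sq]
        split_ifs <;> simp
    _ ≤ ∑ d ∈ (primorial N).divisors, f d :=
        sum_le_sum_of_subset_of_nonneg hsub fun d _ _ => hf0 d
    _ = ∏ p ∈ Nat.primesLE N, (1 + f p) := by
        rw [← hf.prodPrimeFactors_one_add_of_squarefree (squarefree_primorial N),
          primeFactors_primorial]

lemma prod_primesLE_one_add_sigmaTotientKernel_div_le (N : ℕ) :
    ∏ p ∈ Nat.primesLE N, (1 + sigmaTotientKernel p / p) ≤ Real.exp (2 * π ^ 2 / 3) := by
  refine (Real.prod_one_add_le_exp_sum _ fun n =>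
    div_nonneg (sigmaTotientKernel_nonneg n) n.cast_nonneg).trans (Real.exp_le_exp.mpr ?_)
  calc ∑ p ∈ Nat.primesLE N, sigmaTotientKernel p / p
      ≤ ∑ p ∈ Nat.primesLE N, 4 * (1 / (p : ℝ) ^ 2) := by
        refine sum_le_sum fun p hp => ?_
        have hp := Nat.prime_of_mem_primesLE hp
        have h2 : (2 : ℝ) ≤ p := by exact_mod_cast hp.two_le
        rw [sigmaTotientKernel_apply_prime hp, div_div, mul_one_div,
          div_le_div_iff₀ (by nlinarith) (by positivity)]
        nlinarith
    _ ≤ 4 * (π ^ 2 / 6) := by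
        rw [← mul_sum]
        gcongr
        rw [← hasSum_zeta_two.tsum_eq]
        exact hasSum_zeta_two.summable.sum_le_tsum _ fun n _ => by positivity
    _ = 2 * π ^ 2 / 3 := by ring

lemma sum_Ioc_moebius_sq_mul_sigmaTotientKernel_div_le (N : ℕ) :
    ∑ d ∈ Ioc 0 N, (μ d : ℝ) ^ 2 * (sigmaTotientKernel d / d) ≤ Real.exp (2 * π ^ 2 / 3) := by
  set k : ArithmeticFunction ℝ := sigmaTotientKernel.pdiv ArithmeticFunction.id
  have hk (n : ℕ) : k n = sigmaTotientKernel n / n := by simp [k, pdiv_apply]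
  have hk0 (n : ℕ) : 0 ≤ k n := hk n ▸ div_nonneg (sigmaTotientKernel_nonneg n) n.cast_nonneg
  calc ∑ d ∈ Ioc 0 N, (μ d : ℝ) ^ 2 * (sigmaTotientKernel d / d)
      = ∑ d ∈ Ioc 0 N, (μ d : ℝ) ^ 2 * k d := by simp only [hk]
    _ ≤ ∏ p ∈ Nat.primesLE N, (1 + k p) := sum_Ioc_moebius_sq_mul_le_prod_primesLE
        (isMultiplicative_sigmaTotientKernel.pdiv isMultiplicative_id.natCast) hk0 N
    _ ≤ Real.exp (2 * π ^ 2 / 3) := by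
        simpa only [hk] using prod_primesLE_one_add_sigmaTotientKernel_div_le N

theorem lemma9_sigma_one :
    ∃ A : ℝ, 0 < A ∧ ∀ R : ℝ, 1 ≤ R →
      (∑ r ∈ Finset.Icc 1 ⌊R⌋₊,
          (ArithmeticFunction.moebius r : ℝ) ^ 2 * (∑ d ∈ r.divisors, (d : ℝ))
            / (r.totient : ℝ))
        ≤ A * R := by
  refine ⟨Real.exp (2 * π ^ 2 / 3), Real.exp_pos _, fun R hR => ?_⟩
  set N := ⌊R⌋₊
  have hNR : (N : ℝ) ≤ R := Nat.floor_le (by linarith)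
  have hterm_nonneg (d : ℕ) : 0 ≤ (μ d : ℝ) ^ 2 * sigmaTotientKernel d :=
    mul_nonneg (sq_nonneg _) (sigmaTotientKernel_nonneg d)
  calc ∑ r ∈ Icc 1 N, (μ r : ℝ) ^ 2 * (∑ d ∈ r.divisors, (d : ℝ)) / r.totient
      ≤ ∑ r ∈ Ioc 0 N, ∑ d ∈ r.divisors, (μ d : ℝ) ^ 2 * sigmaTotientKernel d :=
        sum_le_sum fun r _ => moebius_sq_mul_sum_divisors_div_totient_le r
    _ ≤ N * ∑ d ∈ Ioc 0 N, (μ d : ℝ) ^ 2 * (sigmaTotientKernel d / d) := by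
        simpa only [mul_div_assoc] using sum_Ioc_sum_divisors_le hterm_nonneg N
    _ ≤ N * Real.exp (2 * π ^ 2 / 3) :=
        mul_le_mul_of_nonneg_left (sum_Ioc_moebius_sq_mul_sigmaTotientKernel_div_le N)
          N.cast_nonneg
    _ ≤ Real.exp (2 * π ^ 2 / 3) * R := by
        rw [mul_comm]
        gcongr
end

section
/- There is a constant A > 0 such that for every real R ≥ 3 and every positive integer n, |λ_R(n)| ≤ A·d(n)·(log R)·(log log R). -/
open Finset ArithmeticFunction

/-! For squarefree `r` with `g = (r, n)`, the inner sum is `∏_{p ∣ g} (1 - p) = ±φ(g)` and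
`φ(r) = φ(g) φ(r/g)`, so the `r`-th term of `λ_R(n)` has absolute value `1/φ(r/g)`. Grouping the
`r` by `g ∣ n` and using that `r ↦ r/g` is injective gives `|λ_R(n)| ≤ d(n) ∑_{m ≤ R} 1/φ(m)`.
Finally `1/φ = (μ²/(id·φ)) ⋆ (1/id)` and `μ²(d)/(d φ(d)) ≤ d(d)/d² = ((1/id²) ⋆ (1/id²))(d)`, so
`∑_{m ≤ R} 1/φ(m) ≤ (∑ 1/a²)² · ∑_{e ≤ R} 1/e ≤ 4 (1 + log R)`. -/

open scoped ArithmeticFunction.Moebius Nat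

theorem Nat.le_totient_mul_card_divisors (n : ℕ) : n ≤ φ n * #n.divisors := by
  rcases eq_or_ne n 0 with rfl | hn
  · simp
  have hτ : 2 ^ #n.primeFactors ≤ #n.divisors := by
    rw [Nat.card_divisors hn, ← prod_const]
    exact prod_le_prod' fun p hp => by
      have := (prime_of_mem_primeFactors hp).factorization_pos_of_dvd hn (dvd_of_mem_primeFactors hp)
      omega
  have hprod : ∏ p ∈ n.primeFactors, p ≤ 2 ^ #n.primeFactors * ∏ p ∈ n.primeFactors, (p - 1) := by
    rw [← prod_const, ← prod_mul_distrib]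
    exact prod_le_prod' fun p hp => by have := (prime_of_mem_primeFactors hp).two_le; omega
  have hpos : 0 < ∏ p ∈ n.primeFactors, (p - 1) :=
    prod_pos fun p hp => by have := (prime_of_mem_primeFactors hp).two_le; omega
  refine le_of_mul_le_mul_right ?_ hpos
  calc n * ∏ p ∈ n.primeFactors, (p - 1) = φ n * ∏ p ∈ n.primeFactors, p :=
        (totient_mul_prod_primeFactors n).symm
    _ ≤ φ n * (2 ^ #n.primeFactors * ∏ p ∈ n.primeFactors, (p - 1)) := by gcongr
    _ ≤ φ n * #n.divisors * ∏ p ∈ n.primeFactors, (p - 1) := by rw [← mul_assoc]; gcongr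

namespace ArithmeticFunction

theorem sum_Ioc_mul_le {R : Type*} [CommSemiring R] [PartialOrder R] [IsOrderedRing R]
    {f g : ArithmeticFunction R} (hf : ∀ n, 0 ≤ f n) (hg : ∀ n, 0 ≤ g n) (N : ℕ) :
    ∑ n ∈ Ioc 0 N, (f * g) n ≤ (∑ n ∈ Ioc 0 N, f n) * ∑ n ∈ Ioc 0 N, g n := by
  rw [sum_Ioc_mul_eq_sum_sum, sum_mul]
  gcongr with n
  · exact hf n
  · exact fun m _ _ => hg m
  · exact Nat.div_le_self N n

noncomputable def invId : ArithmeticFunction ℝ := ⟨fun n => (n : ℝ)⁻¹, by simp⟩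

noncomputable def invTotient : ArithmeticFunction ℝ := ⟨fun n => (φ n : ℝ)⁻¹, by simp⟩

@[simp] theorem invId_apply (n : ℕ) : invId n = (n : ℝ)⁻¹ := rfl

@[simp] theorem invTotient_apply (n : ℕ) : invTotient n = (φ n : ℝ)⁻¹ := rfl

theorem isMultiplicative_invId : invId.IsMultiplicative :=
  ⟨by simp, fun {m n} _ => by simp [mul_comm]⟩

theorem isMultiplicative_invTotient : invTotient.IsMultiplicative :=
  ⟨by simp, fun {m n} h => by simp [Nat.totient_mul h, mul_comm]⟩

noncomputable def moebiusSqDivIdTotient : ArithmeticFunction ℝ :=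
  ((pmul μ μ : ArithmeticFunction ℤ) : ArithmeticFunction ℝ).pmul (invId.pmul invTotient)

theorem moebiusSqDivIdTotient_apply (n : ℕ) :
    moebiusSqDivIdTotient n = (μ n : ℝ) ^ 2 * ((n : ℝ)⁻¹ * (φ n : ℝ)⁻¹) := by
  simp [moebiusSqDivIdTotient, sq]

theorem isMultiplicative_moebiusSqDivIdTotient : moebiusSqDivIdTotient.IsMultiplicative :=
  (isMultiplicative_moebius.pmul isMultiplicative_moebius).intCast.pmul
    (isMultiplicative_invId.pmul isMultiplicative_invTotient)

theorem invTotient_eq_moebiusSqDivIdTotient_mul_invId :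
    invTotient = moebiusSqDivIdTotient * invId := by
  refine (IsMultiplicative.eq_iff_eq_on_prime_powers _ isMultiplicative_invTotient _
    (isMultiplicative_moebiusSqDivIdTotient.mul isMultiplicative_invId)).mpr fun p k hp => ?_
  have hp0 : (p : ℝ) ≠ 0 := by exact_mod_cast hp.ne_zero
  have hp1 : (p : ℝ) - 1 ≠ 0 := sub_ne_zero.mpr (by exact_mod_cast hp.one_lt.ne')
  have hμ : ∀ i, moebiusSqDivIdTotient (p ^ (i + 2)) = 0 := fun i => by
    simp [moebiusSqDivIdTotient_apply, moebius_apply_prime_pow hp]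
  rw [mul_apply, Nat.sum_divisorsAntidiagonal (fun a b => moebiusSqDivIdTotient a * invId b),
    Nat.sum_divisors_prime_pow hp]
  rcases k with _ | k
  · simp [moebiusSqDivIdTotient_apply]
  rw [sum_range_succ', sum_range_succ']
  simp [hμ, moebiusSqDivIdTotient_apply, moebius_apply_prime hp, Nat.totient_prime hp,
    Nat.totient_prime_pow_succ hp, Nat.cast_sub hp.one_le]
  field_simp
  ring

theorem sum_Ioc_invId_le_one_add_log (N : ℕ) : ∑ n ∈ Ioc 0 N, invId n ≤ 1 + Real.log N := by
  have := harmonic_le_one_add_log N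
  rw [harmonic_eq_sum_Icc] at this
  push_cast at this
  simpa [← Icc_add_one_left_eq_Ioc] using this

theorem sum_Ioc_invId_sq_le_two (N : ℕ) : ∑ n ∈ Ioc 0 N, invId.pmul invId n ≤ 2 := by
  simpa [← Ioo_add_one_right_eq_Ioc, ← mul_inv, ← sq] using
    sum_Ioo_inv_sq_le (α := ℝ) 0 (N + 1)

theorem invId_sq_mul_invId_sq_apply (n : ℕ) :
    (invId.pmul invId * invId.pmul invId) n = #n.divisors / (n : ℝ) ^ 2 := by
  rw [mul_apply, Nat.sum_divisorsAntidiagonal (fun a b => invId.pmul invId a * invId.pmul invId b),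
    div_eq_mul_inv, ← nsmul_eq_mul, ← sum_const]
  refine sum_congr rfl fun d hd => ?_
  have hd0 : (d : ℝ) ≠ 0 := by exact_mod_cast (Nat.pos_of_mem_divisors hd).ne'
  simp only [pmul_apply, invId_apply, Nat.cast_div (Nat.dvd_of_mem_divisors hd) hd0]
  field_simp

theorem moebiusSqDivIdTotient_le (n : ℕ) :
    moebiusSqDivIdTotient n ≤ (invId.pmul invId * invId.pmul invId) n := by
  rw [invId_sq_mul_invId_sq_apply, moebiusSqDivIdTotient_apply]
  rcases eq_or_ne n 0 with rfl | hn
  · simp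
  have hμ : (μ n : ℝ) ^ 2 ≤ 1 := by
    have := abs_moebius_le_one (n := n)
    rw [sq_le_one_iff_abs_le_one]
    exact_mod_cast this
  have hn0 : (0 : ℝ) < n := by exact_mod_cast hn.bot_lt
  have hφ : (0 : ℝ) < φ n := by exact_mod_cast Nat.totient_pos.mpr hn.bot_lt
  have hτ : (n : ℝ) ≤ φ n * #n.divisors := by exact_mod_cast Nat.le_totient_mul_card_divisors n
  calc (μ n : ℝ) ^ 2 * ((n : ℝ)⁻¹ * (φ n : ℝ)⁻¹) ≤ 1 * ((n : ℝ)⁻¹ * (φ n : ℝ)⁻¹) := by gcongr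
    _ ≤ #n.divisors / (n : ℝ) ^ 2 := by
      rw [one_mul, ← mul_inv, ← one_div, div_le_div_iff₀ (by positivity) (by positivity)]
      nlinarith

theorem sum_Ioc_invTotient_le (N : ℕ) :
    ∑ n ∈ Ioc 0 N, invTotient n ≤ 4 * (1 + Real.log N) := by
  have hnonneg : ∀ n, 0 ≤ moebiusSqDivIdTotient n := fun n => by
    rw [moebiusSqDivIdTotient_apply]; positivity
  have hinv : ∀ n, 0 ≤ invId n := fun n => by simp
  have hsq : ∀ n, 0 ≤ invId.pmul invId n := fun n => by simp [pmul_apply]; positivity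
  calc ∑ n ∈ Ioc 0 N, invTotient n
      ≤ (∑ n ∈ Ioc 0 N, moebiusSqDivIdTotient n) * ∑ n ∈ Ioc 0 N, invId n := by
        rw [invTotient_eq_moebiusSqDivIdTotient_mul_invId]
        exact sum_Ioc_mul_le hnonneg hinv N
    _ ≤ (∑ n ∈ Ioc 0 N, (invId.pmul invId * invId.pmul invId) n) * (1 + Real.log N) :=
        mul_le_mul (sum_le_sum fun n _ => moebiusSqDivIdTotient_le n)
          (sum_Ioc_invId_le_one_add_log N) (sum_nonneg fun n _ => hinv n)
          (sum_nonneg fun n _ => (hnonneg n).trans (moebiusSqDivIdTotient_le n))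
    _ ≤ ((∑ n ∈ Ioc 0 N, invId.pmul invId n) * ∑ n ∈ Ioc 0 N, invId.pmul invId n) *
          (1 + Real.log N) := by
        gcongr
        exact sum_Ioc_mul_le hsq hsq N
    _ ≤ (2 * 2) * (1 + Real.log N) := by
        gcongr
        · exact sum_nonneg fun n _ => hsq n
        · exact sum_Ioc_invId_sq_le_two N
        · exact sum_Ioc_invId_sq_le_two N
    _ = 4 * (1 + Real.log N) := by norm_num

end ArithmeticFunction

theorem Nat.totient_eq_prod_of_squarefree {n : ℕ} (hn : Squarefree n) :
    (φ n : ℝ) = ∏ p ∈ n.primeFactors, ((p : ℝ) - 1) := by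
  have h := Nat.totient_mul_prod_primeFactors n
  rw [Nat.prod_primeFactors_of_squarefree hn, mul_comm n] at h
  rw [Nat.eq_of_mul_eq_mul_right (Nat.pos_of_ne_zero hn.ne_zero) h, Nat.cast_prod]
  exact prod_congr rfl fun p hp => by
    rw [Nat.cast_sub (Nat.prime_of_mem_primeFactors hp).one_le, Nat.cast_one]

theorem Nat.abs_sum_divisors_mul_moebius {n : ℕ} (hn : Squarefree n) :
    |∑ d ∈ n.divisors, (d : ℝ) * μ d| = φ n := by
  have h := isMultiplicative_id.natCast.prodPrimeFactors_one_sub_of_squarefree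
    (R := ℝ) _ hn
  simp only [natCoe_apply, id_apply] at h
  rw [sum_congr rfl fun d _ => mul_comm _ _, ← h, abs_prod, Nat.totient_eq_prod_of_squarefree hn]
  refine prod_congr rfl fun p hp => ?_
  have : (1 : ℝ) ≤ p := by exact_mod_cast (Nat.prime_of_mem_primeFactors hp).one_le
  rw [abs_of_nonpos (by linarith), neg_sub]

theorem Nat.totient_div_totient_of_squarefree_of_dvd {r g : ℕ} (hr : Squarefree r) (hg : g ∣ r) :
    (φ g : ℝ) / φ r = (φ (r / g) : ℝ)⁻¹ := by
  obtain ⟨k, rfl⟩ := hg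
  have hg0 : g ≠ 0 := left_ne_zero_of_mul hr.ne_zero
  have hφ : (φ g : ℝ) ≠ 0 := by exact_mod_cast (Nat.totient_pos.mpr hg0.bot_lt).ne'
  rw [Nat.mul_div_cancel_left k hg0.bot_lt, Nat.totient_mul (Nat.coprime_of_squarefree_mul hr),
    Nat.cast_mul]
  field_simp

theorem abs_lamR_summand_le (n r : ℕ) :
    |(μ r : ℝ) ^ 2 / φ r * ∑ d ∈ (r.gcd n).divisors, (d : ℝ) * μ d| ≤ (φ (r / r.gcd n) : ℝ)⁻¹ := by
  by_cases hr : Squarefree r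
  · rw [abs_mul, Nat.abs_sum_divisors_mul_moebius (hr.squarefree_of_dvd (Nat.gcd_dvd_left r n)),
      ← Int.cast_pow, moebius_sq_eq_one_of_squarefree hr, Int.cast_one, abs_of_nonneg (by positivity),
      one_div_mul_eq_div, Nat.totient_div_totient_of_squarefree_of_dvd hr (Nat.gcd_dvd_left r n)]
  · simp [moebius_eq_zero_of_not_squarefree hr]

theorem sum_Icc_div_gcd_le {n : ℕ} (hn : n ≠ 0) {f : ℕ → ℝ} (hf : ∀ m, 0 ≤ f m) (N : ℕ) :
    ∑ r ∈ Icc 1 N, f (r / r.gcd n) ≤ #n.divisors * ∑ m ∈ Icc 1 N, f m := by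
  rw [← sum_fiberwise_of_maps_to (t := n.divisors) (g := fun r => r.gcd n)
    fun r _ => Nat.mem_divisors.mpr ⟨Nat.gcd_dvd_right r n, hn⟩, ← nsmul_eq_mul, ← sum_const]
  refine sum_le_sum fun g hg => ?_
  set S := {r ∈ Icc 1 N | r.gcd n = g}
  have hdvd : ∀ r ∈ S, g ∣ r := fun r hr => (mem_filter.mp hr).2 ▸ Nat.gcd_dvd_left r n
  calc ∑ r ∈ S, f (r / r.gcd n) = ∑ r ∈ S, f (r / g) :=
        sum_congr rfl fun r hr => by rw [(mem_filter.mp hr).2]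
    _ = ∑ m ∈ S.image (· / g), f m :=
        (sum_image fun r hr s hs h => (Nat.div_left_inj (hdvd r hr) (hdvd s hs)).mp h).symm
    _ ≤ ∑ m ∈ Icc 1 N, f m := by
        refine sum_le_sum_of_subset_of_nonneg (fun m hm => ?_) fun m _ _ => hf m
        obtain ⟨r, hr, rfl⟩ := mem_image.mp hm
        have hrN := mem_Icc.mp (mem_filter.mp hr).1
        exact mem_Icc.mpr ⟨Nat.div_pos (Nat.le_of_dvd hrN.1 (hdvd r hr)) (Nat.pos_of_mem_divisors hg),
          (Nat.div_le_self r g).trans hrN.2⟩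

theorem abs_lamR_le (R : ℝ) {n : ℕ} (hn : n ≠ 0) :
    |lamR R n| ≤ #n.divisors * ∑ m ∈ Icc 1 ⌊R⌋₊, (φ m : ℝ)⁻¹ :=
  (abs_sum_le_sum_abs _ _).trans <| (sum_le_sum fun r _ => abs_lamR_summand_le n r).trans <|
    sum_Icc_div_gcd_le (f := fun m => (φ m : ℝ)⁻¹) hn (fun m => by positivity) _

theorem sum_Icc_floor_inv_totient_le {R : ℝ} (hR : 1 ≤ R) :
    ∑ m ∈ Icc 1 ⌊R⌋₊, (φ m : ℝ)⁻¹ ≤ 4 * (1 + Real.log R) := by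
  have hfloor : (1 : ℝ) ≤ ⌊R⌋₊ := by exact_mod_cast Nat.one_le_floor_iff R |>.mpr hR
  calc ∑ m ∈ Icc 1 ⌊R⌋₊, (φ m : ℝ)⁻¹ ≤ 4 * (1 + Real.log ⌊R⌋₊) :=
        ArithmeticFunction.sum_Ioc_invTotient_le ⌊R⌋₊
    _ ≤ 4 * (1 + Real.log R) := by
        gcongr
        exact Nat.floor_le (by linarith)

theorem lamR_upper_bound :
    ∃ A : ℝ, 0 < A ∧ ∀ (R : ℝ) (n : ℕ), 3 ≤ R → 1 ≤ n →
      |lamR R n| ≤ A * (n.divisors.card : ℝ) * Real.log R * Real.log (Real.log R) := by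
  have hlog3 : 1 < Real.log 3 := by
    rw [Real.lt_log_iff_exp_lt (by norm_num)]
    exact Real.exp_one_lt_d9.trans (by norm_num)
  have hll3 : 0 < Real.log (Real.log 3) := Real.log_pos hlog3
  refine ⟨8 / Real.log (Real.log 3), by positivity, fun R n hR hn => ?_⟩
  have hlogR : Real.log 3 ≤ Real.log R := Real.log_le_log (by norm_num) hR
  have hllR : Real.log (Real.log 3) ≤ Real.log (Real.log R) :=
    Real.log_le_log (by linarith) hlogR
  calc |lamR R n| ≤ #n.divisors * ∑ m ∈ Icc 1 ⌊R⌋₊, (φ m : ℝ)⁻¹ := abs_lamR_le R (by omega)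
    _ ≤ #n.divisors * (8 * Real.log R) := by
        gcongr
        linarith [sum_Icc_floor_inv_totient_le (R := R) (by linarith)]
    _ = 8 / Real.log (Real.log 3) * #n.divisors * Real.log R * Real.log (Real.log 3) := by
        field_simp
    _ ≤ 8 / Real.log (Real.log 3) * #n.divisors * Real.log R * Real.log (Real.log R) :=
        mul_le_mul_of_nonneg_left hllR (mul_nonneg (by positivity) (by linarith))
end
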